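/- Existence of hyperbolic framed curves: for every smooth map (m,n,a,b) : I → ℝ⁴ on an open interval I ⊆ ℝ, there exists a hyperbolic framed curve (γ,v₁,v₂) : I → H³ × Δ₅ whose curvature is (m,n,a,b). -/

import Mathlib

noncomputable section

open Real Set

def mink (x y : Fin 4 → ℝ) : ℝ :=
  -(x 0 * y 0) + x 1 * y 1 + x 2 * y 2 + x 3 * y 3

def H3 : Set (Fin 4 → ℝ) := {x | mink x x = -1}

def dS3 : Set (Fin 4 → ℝ) := {x | mink x x = 1}

def lcross (x y z : Fin 4 → ℝ) : Fin 4 → ℝ := fun i =>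
  (if i = 0 then (-1 : ℝ) else 1) *
    (Matrix.of ![(fun j => if j = i then (1 : ℝ) else 0), x, y, z]).det

def IsHypFramed (I : Set ℝ) (γ v₁ v₂ : ℝ → Fin 4 → ℝ) : Prop :=
  ContDiffOn ℝ (⊤ : ℕ∞) γ I ∧ ContDiffOn ℝ (⊤ : ℕ∞) v₁ I ∧ ContDiffOn ℝ (⊤ : ℕ∞) v₂ I ∧
  ∀ t ∈ I,
    mink (γ t) (γ t) = -1 ∧ mink (v₁ t) (v₁ t) = 1 ∧ mink (v₂ t) (v₂ t) = 1 ∧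
    mink (v₁ t) (v₂ t) = 0 ∧ mink (γ t) (v₁ t) = 0 ∧ mink (γ t) (v₂ t) = 0 ∧
    mink (deriv γ t) (v₁ t) = 0 ∧ mink (deriv γ t) (v₂ t) = 0

def HasCurv (I : Set ℝ) (γ v₁ v₂ : ℝ → Fin 4 → ℝ) (m n a b : ℝ → ℝ) : Prop :=
  ∀ t ∈ I,
    m t = mink (deriv γ t) (lcross (γ t) (v₁ t) (v₂ t)) ∧
    n t = mink (deriv v₁ t) (v₂ t) ∧
    a t = mink (deriv v₁ t) (lcross (γ t) (v₁ t) (v₂ t)) ∧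
    b t = mink (deriv v₂ t) (lcross (γ t) (v₁ t) (v₂ t))

def SingPt (f : ℝ × ℝ → Fin 4 → ℝ) (p : ℝ × ℝ) : Prop :=
  LinearMap.rank (fderiv ℝ f p).toLinearMap < 2

def AEquivAt (X : Set (Fin 4 → ℝ)) (f : ℝ × ℝ → Fin 4 → ℝ) (p : ℝ × ℝ)
    (g : ℝ → ℝ → Fin 3 → ℝ) : Prop :=
  ∃ (U : Set (ℝ × ℝ)) (φ φi : ℝ × ℝ → ℝ × ℝ)
    (V : Set (Fin 4 → ℝ)) (ψ : (Fin 4 → ℝ) → Fin 3 → ℝ) (ψi : (Fin 3 → ℝ) → Fin 4 → ℝ),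
    IsOpen U ∧ p ∈ U ∧ φ p = 0 ∧ ContDiffOn ℝ (⊤ : ℕ∞) φ U ∧
    IsOpen (φ '' U) ∧ ContDiffOn ℝ (⊤ : ℕ∞) φi (φ '' U) ∧ (∀ q ∈ U, φi (φ q) = q) ∧
    IsOpen V ∧ f p ∈ V ∧ ψ (f p) = 0 ∧ ContDiffOn ℝ (⊤ : ℕ∞) ψ V ∧
    IsOpen (ψ '' (V ∩ X)) ∧ ContDiffOn ℝ (⊤ : ℕ∞) ψi (ψ '' (V ∩ X)) ∧
    (∀ x ∈ V ∩ X, ψi (ψ x) = x) ∧ (∀ y ∈ ψ '' (V ∩ X), ψi y ∈ X) ∧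
    MapsTo f U V ∧ ∀ q ∈ U, ψ (f q) = g (φ q).1 (φ q).2

def IsCuspidalEdge (X : Set (Fin 4 → ℝ)) (f : ℝ × ℝ → Fin 4 → ℝ) (p : ℝ × ℝ) : Prop :=
  AEquivAt X f p fun u v => ![u, v ^ 2, v ^ 3]

def IsSwallowtail (X : Set (Fin 4 → ℝ)) (f : ℝ × ℝ → Fin 4 → ℝ) (p : ℝ × ℝ) : Prop :=
  AEquivAt X f p fun u v => ![u, 4 * v ^ 3 + 2 * u * v, 3 * v ^ 4 + u * v ^ 2]

def IsCuspidalBeaks (X : Set (Fin 4 → ℝ)) (f : ℝ × ℝ → Fin 4 → ℝ) (p : ℝ × ℝ) : Prop :=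
  AEquivAt X f p fun u v => ![u, 2 * v ^ 3 - u ^ 2 * v, 3 * v ^ 4 - u ^ 2 * v ^ 2]

def IsCuspidalLips (X : Set (Fin 4 → ℝ)) (f : ℝ × ℝ → Fin 4 → ℝ) (p : ℝ × ℝ) : Prop :=
  AEquivAt X f p fun u v => ![u, 2 * v ^ 3 + u ^ 2 * v, 3 * v ^ 4 + u ^ 2 * v ^ 2]

def IsCuspidalCrossCap (X : Set (Fin 4 → ℝ)) (f : ℝ × ℝ → Fin 4 → ℝ) (p : ℝ × ℝ) : Prop :=
  AEquivAt X f p fun u v => ![u, v ^ 2, u * v ^ 3]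

def CurveAEquivAt (X : Set (Fin 4 → ℝ)) (c : ℝ → Fin 4 → ℝ) (t₀ : ℝ)
    (g : ℝ → Fin 3 → ℝ) : Prop :=
  ∃ (U : Set ℝ) (φ φi : ℝ → ℝ)
    (V : Set (Fin 4 → ℝ)) (ψ : (Fin 4 → ℝ) → Fin 3 → ℝ) (ψi : (Fin 3 → ℝ) → Fin 4 → ℝ),
    IsOpen U ∧ t₀ ∈ U ∧ φ t₀ = 0 ∧ ContDiffOn ℝ (⊤ : ℕ∞) φ U ∧
    IsOpen (φ '' U) ∧ ContDiffOn ℝ (⊤ : ℕ∞) φi (φ '' U) ∧ (∀ q ∈ U, φi (φ q) = q) ∧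
    IsOpen V ∧ c t₀ ∈ V ∧ ψ (c t₀) = 0 ∧ ContDiffOn ℝ (⊤ : ℕ∞) ψ V ∧
    IsOpen (ψ '' (V ∩ X)) ∧ ContDiffOn ℝ (⊤ : ℕ∞) ψi (ψ '' (V ∩ X)) ∧
    (∀ x ∈ V ∩ X, ψi (ψ x) = x) ∧ (∀ y ∈ ψ '' (V ∩ X), ψi y ∈ X) ∧
    MapsTo c U V ∧ ∀ q ∈ U, ψ (c q) = g (φ q)

def Has234Cusp (X : Set (Fin 4 → ℝ)) (c : ℝ → Fin 4 → ℝ) (t₀ : ℝ) : Prop :=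
  CurveAEquivAt X c t₀ fun s => ![s ^ 2, s ^ 3, s ^ 4]

/-!
The curve is read off from a moving frame `(μ, γ, v₁, v₂)` solving the linear Frenet–Serret
system `F' = C(t) F`, which has a global smooth solution on the open interval `I`. The coefficient
matrix `C` is skew for the Gram matrix `diag(1, -1, 1, 1)` of the frame, so this Gram matrix is a
stationary solution of the linear ODE satisfied by the Gram matrix of `F`; by uniqueness the frame
stays pseudo-orthonormal. Then `det F = ±1`, and by continuity `det F = 1`, i.e.
`⟨μ, γ ∧ v₁ ∧ v₂⟩ = 1`, which identifies the curvature of the framed curve with `(m, n, a, b)`.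
-/

section LinearODE

variable {E : Type*} [NormedAddCommGroup E] [NormedSpace ℝ E]

def radialRetraction (R : ℝ) (x : E) : E := (R / max ‖x‖ R) • x

variable {R : ℝ}

lemma radialRetraction_of_norm_le (hR : 0 < R) {x : E} (hx : ‖x‖ ≤ R) :
    radialRetraction R x = x := by
  rw [radialRetraction, max_eq_right hx, div_self hR.ne', one_smul]

lemma norm_radialRetraction (hR : 0 < R) (x : E) :
    ‖radialRetraction R x‖ = R / max ‖x‖ R * ‖x‖ := by
  rw [radialRetraction, norm_smul, Real.norm_of_nonneg (by positivity)]

lemma norm_radialRetraction_le (hR : 0 < R) (x : E) : ‖radialRetraction R x‖ ≤ R := by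
  rw [norm_radialRetraction hR, div_mul_eq_mul_div, div_le_iff₀ (by positivity)]
  exact mul_le_mul_of_nonneg_left (le_max_left _ _) hR.le

lemma norm_radialRetraction_le_norm (hR : 0 < R) (x : E) : ‖radialRetraction R x‖ ≤ ‖x‖ := by
  rw [norm_radialRetraction hR]
  exact mul_le_of_le_one_left (norm_nonneg x) ((div_le_one (by positivity)).2 (le_max_right _ _))

lemma lipschitzWith_radialRetraction (hR : 0 < R) :
    LipschitzWith 2 (radialRetraction (E := E) R) := by
  refine LipschitzWith.of_dist_le_mul fun x y => ?_
  set Mx := max ‖x‖ R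
  set My := max ‖y‖ R
  have hMx : 0 < Mx := lt_max_of_lt_right hR
  have hMy : 0 < My := lt_max_of_lt_right hR
  have hscale : |R / Mx - R / My| * ‖y‖ ≤ ‖x - y‖ :=
    calc |R / Mx - R / My| * ‖y‖ = R / Mx * (‖y‖ / My) * |My - Mx| := by
          rw [div_sub_div _ _ hMx.ne' hMy.ne', abs_div, abs_of_pos (mul_pos hMx hMy),
            show R * My - Mx * R = R * (My - Mx) by ring, abs_mul, abs_of_pos hR]
          field_simp
      _ ≤ 1 * 1 * |‖y‖ - ‖x‖| := by
          have hx : R / Mx ≤ 1 := (div_le_one hMx).2 (le_max_right _ _)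
          have hy : ‖y‖ / My ≤ 1 := (div_le_one hMy).2 (le_max_left _ _)
          have hM : |My - Mx| ≤ |‖y‖ - ‖x‖| := abs_max_sub_max_le_abs _ _ _
          gcongr
      _ ≤ ‖x - y‖ := by rw [one_mul, one_mul, abs_sub_comm]; exact abs_norm_sub_norm_le x y
  have hsplit : radialRetraction R x - radialRetraction R y =
      (R / Mx) • (x - y) + (R / Mx - R / My) • y := by
    simp only [radialRetraction, smul_sub, sub_smul]; abel
  rw [dist_eq_norm, dist_eq_norm, hsplit, NNReal.coe_ofNat, two_mul]
  refine (norm_add_le _ _).trans (add_le_add ?_ ?_)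
  · rw [norm_smul, Real.norm_of_nonneg (by positivity)]
    exact mul_le_of_le_one_left (norm_nonneg _) ((div_le_one hMx).2 (le_max_right _ _))
  · rwa [norm_smul, Real.norm_eq_abs]

variable {c d t₀ K : ℝ} {f f' : ℝ → E}

lemma norm_le_mul_exp_of_norm_deriv_le_right
    (hf : ∀ t ∈ Icc c d, HasDerivWithinAt f (f' t) (Icc c d) t)
    (hbound : ∀ t ∈ Icc c d, ‖f' t‖ ≤ K * ‖f t‖) (ht₀ : t₀ ∈ Icc c d) :
    ∀ t ∈ Icc t₀ d, ‖f t‖ ≤ ‖f t₀‖ * exp (K * (t - t₀)) := by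
  have hsub : Icc t₀ d ⊆ Icc c d := Icc_subset_Icc_left ht₀.1
  intro t ht
  have h := norm_le_gronwallBound_of_norm_deriv_right_le (ε := 0) (δ := ‖f t₀‖)
    (fun s hs => (hf s (hsub hs)).continuousWithinAt.mono hsub)
    (fun s hs => (hf s (hsub (Ico_subset_Icc_self hs))).mono_of_mem_nhdsWithin
      (Filter.mem_of_superset (Icc_mem_nhdsGE hs.2) (Icc_subset_Icc_left (ht₀.1.trans hs.1))))
    le_rfl (fun s hs => by simpa using hbound s (hsub (Ico_subset_Icc_self hs))) t ht
  rwa [gronwallBound_ε0] at h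

lemma HasDerivWithinAt.comp_neg_Icc {x : ℝ} {y : E}
    (h : HasDerivWithinAt f y (Icc c d) (-x)) :
    HasDerivWithinAt (fun s => f (-s)) (-y) (Icc (-d) (-c)) x := by
  have hmaps : MapsTo Neg.neg (Icc (-d) (-c)) (Icc c d) :=
    fun s hs => ⟨le_neg.mp hs.2, neg_le.mp hs.1⟩
  simpa [Function.comp_def] using h.scomp x (hasDerivAt_neg x).hasDerivWithinAt hmaps

lemma norm_le_mul_exp_of_norm_deriv_le
    (hf : ∀ t ∈ Icc c d, HasDerivWithinAt f (f' t) (Icc c d) t)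
    (hbound : ∀ t ∈ Icc c d, ‖f' t‖ ≤ K * ‖f t‖) (ht₀ : t₀ ∈ Icc c d) :
    ∀ t ∈ Icc c d, ‖f t‖ ≤ ‖f t₀‖ * exp (K * |t - t₀|) := by
  intro t ht
  rcases le_total t₀ t with h | h
  · rw [abs_of_nonneg (sub_nonneg.2 h)]
    exact norm_le_mul_exp_of_norm_deriv_le_right hf hbound ht₀ t ⟨h, ht.2⟩
  · have hneg : ∀ s ∈ Icc (-d) (-c), -s ∈ Icc c d :=
      fun s hs => ⟨le_neg.mp hs.2, neg_le.mp hs.1⟩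
    have := norm_le_mul_exp_of_norm_deriv_le_right (f := fun s => f (-s))
      (f' := fun s => -f' (-s))
      (fun s hs => (hf (-s) (hneg s hs)).comp_neg_Icc)
      (fun s hs => by simpa using hbound (-s) (hneg s hs))
      ⟨neg_le_neg ht₀.2, neg_le_neg ht₀.1⟩ (-t) ⟨neg_le_neg h, neg_le_neg ht.1⟩
    rw [abs_of_nonpos (sub_nonpos.2 h)]
    simpa [neg_sub, sub_eq_add_neg, add_comm] using this

lemma exists_nonneg_bound_of_continuousOn_Icc {G : Type*} [NormedAddCommGroup G] {A : ℝ → G}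
    (hA : ContinuousOn A (Icc c d)) : ∃ K, 0 ≤ K ∧ ∀ t ∈ Icc c d, ‖A t‖ ≤ K := by
  obtain ⟨K, hK⟩ := isCompact_Icc.exists_bound_of_continuousOn hA
  exact ⟨max K 0, le_max_right _ _, fun t ht => (hK t ht).trans (le_max_left _ _)⟩

/-- The vector field is made bounded by precomposing with a radial retraction onto a ball that,
by Grönwall, the solution never leaves. -/
lemma exists_hasDerivWithinAt_clm_Icc [CompleteSpace E] {A : ℝ → E →L[ℝ] E}
    (hA : ContinuousOn A (Icc c d)) (ht₀ : t₀ ∈ Icc c d) (x₀ : E) :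
    ∃ f : ℝ → E, f t₀ = x₀ ∧ ∀ t ∈ Icc c d, HasDerivWithinAt f (A t (f t)) (Icc c d) t := by
  obtain ⟨K, hK, hAK⟩ := exists_nonneg_bound_of_continuousOn_Icc hA
  set R := (‖x₀‖ + 1) * exp (K * (d - c)) with hR_def
  have hR : 0 < R := by positivity
  have hcd : 0 ≤ d - c := by linarith [ht₀.1, ht₀.2]
  set v : ℝ → E → E := fun t x => A t (radialRetraction R x)
  have hv_le : ∀ t ∈ Icc c d, ∀ x, ‖v t x‖ ≤ K * ‖radialRetraction R x‖ := fun t ht x =>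
    ((A t).le_opNorm _).trans (mul_le_mul_of_nonneg_right (hAK t ht) (norm_nonneg _))
  have hpl : IsPicardLindelof v ⟨t₀, ht₀⟩ x₀ (K * R * (d - c)).toNNReal 0 (K * R).toNNReal
      (2 * K).toNNReal := by
    constructor
    · intro t ht
      refine (((A t).lipschitz.comp (lipschitzWith_radialRetraction hR)).weaken ?_).lipschitzOnWith
      rw [← NNReal.coe_le_coe, NNReal.coe_mul, coe_nnnorm, NNReal.coe_ofNat,
        Real.coe_toNNReal _ (by positivity)]
      linarith [hAK t ht]
    · exact fun x _ => hA.clm_apply continuousOn_const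
    · intro t ht x _
      rw [Real.coe_toNNReal _ (by positivity)]
      exact (hv_le t ht x).trans (mul_le_mul_of_nonneg_left (norm_radialRetraction_le hR x) hK)
    · rw [Real.coe_toNNReal _ (by positivity),
        Real.coe_toNNReal _ (mul_nonneg (by positivity) hcd), NNReal.coe_zero, sub_zero]
      exact mul_le_mul_of_nonneg_left (max_le (by linarith [ht₀.1]) (by linarith [ht₀.2]))
        (by positivity)
  obtain ⟨g, hg₀, hg⟩ := hpl.exists_eq_forall_mem_Icc_hasDerivWithinAt₀
  have hg_le : ∀ t ∈ Icc c d, ‖g t‖ ≤ R := by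
    intro t ht
    refine (norm_le_mul_exp_of_norm_deriv_le hg (fun s hs => (hv_le s hs _).trans
      (mul_le_mul_of_nonneg_left (norm_radialRetraction_le_norm hR _) hK)) ht₀ t ht).trans ?_
    rw [show g t₀ = x₀ from hg₀, hR_def]
    gcongr
    · linarith
    · exact abs_sub_le_iff.2 ⟨by linarith [ht.2, ht₀.1], by linarith [ht.1, ht₀.2]⟩
  refine ⟨g, hg₀, fun t ht => ?_⟩
  simpa only [v, radialRetraction_of_norm_le hR (hg_le t ht)] using hg t ht

lemma exists_Icc_subset_of_mem {I : Set ℝ} (hIo : IsOpen I) (hIc : I.OrdConnected) {s t : ℝ}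
    (hs : s ∈ I) (ht : t ∈ I) : ∃ c d, Icc c d ⊆ I ∧ s ∈ Ioo c d ∧ t ∈ Ioo c d := by
  obtain ⟨c₁, hc₁, hc₁I⟩ := Filter.Eventually.exists_lt (hIo.mem_nhds hs)
  obtain ⟨c₂, hc₂, hc₂I⟩ := Filter.Eventually.exists_lt (hIo.mem_nhds ht)
  obtain ⟨d₁, hd₁, hd₁I⟩ := Filter.Eventually.exists_gt (hIo.mem_nhds hs)
  obtain ⟨d₂, hd₂, hd₂I⟩ := Filter.Eventually.exists_gt (hIo.mem_nhds ht)
  refine ⟨min c₁ c₂, max d₁ d₂,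
    hIc.out (min_rec' (· ∈ I) hc₁I hc₂I) (max_rec' (· ∈ I) hd₁I hd₂I),
    ⟨min_lt_of_left_lt hc₁, lt_max_of_lt_left hd₁⟩,
    ⟨min_lt_of_right_lt hc₂, lt_max_of_lt_right hd₂⟩⟩

variable {J : Set ℝ} {A : ℝ → E →L[ℝ] E}

lemma eqOn_of_hasDerivAt_clm (hJo : IsOpen J) (hJc : J.OrdConnected) (hA : ContinuousOn A J)
    {f g : ℝ → E} (hf : ∀ t ∈ J, HasDerivAt f (A t (f t)) t)
    (hg : ∀ t ∈ J, HasDerivAt g (A t (g t)) t) (ht₀ : t₀ ∈ J) (heq : f t₀ = g t₀) :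
    EqOn f g J := by
  intro t ht
  obtain ⟨c, d, hcd, ht₀cd, htcd⟩ := exists_Icc_subset_of_mem hJo hJc ht₀ ht
  obtain ⟨K, hK, hAK⟩ := exists_nonneg_bound_of_continuousOn_Icc (hA.mono hcd)
  have hlip : ∀ s ∈ Ioo c d, LipschitzOnWith K.toNNReal (A s) univ := by
    intro s hs
    refine ((A s).lipschitz.weaken ?_).lipschitzOnWith
    rw [← NNReal.coe_le_coe, coe_nnnorm, Real.coe_toNNReal _ hK]
    exact hAK s (Ioo_subset_Icc_self hs)
  exact ODE_solution_unique_of_mem_Ioo (v := fun s x => A s x) hlip ht₀cd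
    (fun s hs => ⟨hf s (hcd (Ioo_subset_Icc_self hs)), mem_univ _⟩)
    (fun s hs => ⟨hg s (hcd (Ioo_subset_Icc_self hs)), mem_univ _⟩) heq htcd

lemma exists_hasDerivAt_clm [CompleteSpace E] (hJo : IsOpen J) (hJc : J.OrdConnected)
    (hA : ContinuousOn A J) (ht₀ : t₀ ∈ J) (x₀ : E) :
    ∃ f : ℝ → E, f t₀ = x₀ ∧ ∀ t ∈ J, HasDerivAt f (A t (f t)) t := by
  have hlocal : ∀ t ∈ J, ∃ c d, Icc c d ⊆ J ∧ t₀ ∈ Ioo c d ∧ t ∈ Ioo c d ∧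
      ∃ g : ℝ → E, g t₀ = x₀ ∧ ∀ s ∈ Ioo c d, HasDerivAt g (A s (g s)) s := by
    intro t ht
    obtain ⟨c, d, hcd, ht₀cd, htcd⟩ := exists_Icc_subset_of_mem hJo hJc ht₀ ht
    obtain ⟨g, hg₀, hg⟩ := exists_hasDerivWithinAt_clm_Icc (hA.mono hcd)
      (Ioo_subset_Icc_self ht₀cd) x₀
    exact ⟨c, d, hcd, ht₀cd, htcd, g, hg₀, fun s hs =>
      (hg s (Ioo_subset_Icc_self hs)).hasDerivAt (Icc_mem_nhds hs.1 hs.2)⟩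
  choose c d hcd ht₀cd htcd g hg₀ hg using hlocal
  classical
  have hagree : ∀ t (ht : t ∈ J) s (hs : s ∈ J), s ∈ Ioo (c t ht) (d t ht) →
      g s hs s = g t ht s := by
    intro t ht s hs hst
    refine eqOn_of_hasDerivAt_clm (isOpen_Ioo.inter isOpen_Ioo) inferInstance
      (hA.mono (inter_subset_left.trans (Ioo_subset_Icc_self.trans (hcd s hs))))
      (fun u hu => hg s hs u hu.1) (fun u hu => hg t ht u hu.2) ⟨ht₀cd s hs, ht₀cd t ht⟩
      ((hg₀ s hs).trans (hg₀ t ht).symm) ⟨htcd s hs, hst⟩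
  refine ⟨fun t => if ht : t ∈ J then g t ht t else x₀, by simp [ht₀, hg₀], fun t ht => ?_⟩
  have hloc : (fun s => if hs : s ∈ J then g s hs s else x₀) =ᶠ[nhds t] g t ht :=
    Filter.eventually_of_mem (Ioo_mem_nhds (htcd t ht).1 (htcd t ht).2) fun s hs => by
      simp only [dif_pos (hcd t ht (Ioo_subset_Icc_self hs)), hagree t ht s _ hs]
  simpa [ht] using (hg t ht t (htcd t ht)).congr_of_eventuallyEq hloc

lemma contDiffOn_of_hasDerivAt_clm {n : ℕ∞} (hJo : IsOpen J) (hA : ContDiffOn ℝ n A J)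
    {f : ℝ → E} (hf : ∀ t ∈ J, HasDerivAt f (A t (f t)) t) : ContDiffOn ℝ n f J := by
  have hnat : ∀ k : ℕ, (k : ℕ∞) ≤ n → ContDiffOn ℝ k f J := by
    intro k
    induction k with
    | zero => exact fun _ => contDiffOn_zero.2 (HasDerivAt.continuousOn hf)
    | succ k ih =>
      intro hk
      have hk' : (k : ℕ∞) ≤ n := (Nat.cast_le.2 k.le_succ).trans hk
      rw [Nat.cast_succ, contDiffOn_succ_iff_deriv_of_isOpen hJo]
      refine ⟨fun t ht => (hf t ht).differentiableAt.differentiableWithinAt, by simp, ?_⟩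
      exact ((hA.of_le (mod_cast hk')).clm_apply (ih hk')).congr fun t ht => (hf t ht).deriv
  induction n with
  | top => exact contDiffOn_infty.2 fun k => hnat k le_top
  | coe n => exact hnat n le_rfl

end LinearODE

lemma IsPreconnected.eq_one_of_sq_eq_one {X : Type*} [TopologicalSpace X] {s : Set X}
    {f : X → ℝ} (hs : IsPreconnected s) (hf : ContinuousOn f s) (hsq : ∀ x ∈ s, f x ^ 2 = 1)
    {x₀ : X} (hx₀ : x₀ ∈ s) (h₀ : f x₀ = 1) : ∀ x ∈ s, f x = 1 := by
  intro x hx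
  refine (sq_eq_one_iff.1 (hsq x hx)).resolve_right fun hneg => ?_
  obtain ⟨y, hy, hy0⟩ := hs.intermediate_value hx hx₀ hf (show (0 : ℝ) ∈ Icc (f x) (f x₀) by
    rw [hneg, h₀]; norm_num)
  simpa [hy0] using hsq y hy

section Frames

variable {ι V : Type*} [Fintype ι] [NormedAddCommGroup V] [NormedSpace ℝ V]

def frameMap : (ι → ι → ℝ) →ₗ[ℝ] (ι → V) →L[ℝ] (ι → V) where
  toFun C := ContinuousLinearMap.pi fun i => ∑ k, C i k • ContinuousLinearMap.proj k
  map_add' C D := by ext; simp [add_smul, Finset.sum_add_distrib]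
  map_smul' c C := by ext; simp [Finset.smul_sum, smul_smul]

@[simp]
lemma frameMap_apply (C : ι → ι → ℝ) (F : ι → V) (i : ι) :
    frameMap C F i = ∑ k, C i k • F k := by
  simp [frameMap]

lemma ContDiffOn.frameMap {n : WithTop ℕ∞} {s : Set ℝ} {C : ℝ → ι → ι → ℝ}
    (hC : ContDiffOn ℝ n C s) :
    ContDiffOn ℝ n (fun t => (frameMap (C t) : (ι → V) →L[ℝ] _)) s :=
  (LinearMap.toContinuousLinearMap (_root_.frameMap (ι := ι) (V := V))).contDiff.comp_contDiffOn
    hC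

end Frames

lemma mink_comm (x y : Fin 4 → ℝ) : mink x y = mink y x := by
  simp only [mink]; ring

@[simp]
lemma mink_add_left (x y z : Fin 4 → ℝ) : mink (x + y) z = mink x z + mink y z := by
  simp only [mink, Pi.add_apply]; ring

@[simp]
lemma mink_smul_left (c : ℝ) (x y : Fin 4 → ℝ) : mink (c • x) y = c * mink x y := by
  simp only [mink, Pi.smul_apply, smul_eq_mul]; ring

@[simp]
lemma mink_neg_left (x y : Fin 4 → ℝ) : mink (-x) y = -mink x y := by
  simp only [mink, Pi.neg_apply]; ring

@[simp]
lemma mink_smul_right (c : ℝ) (x y : Fin 4 → ℝ) : mink x (c • y) = c * mink x y := by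
  rw [mink_comm, mink_smul_left, mink_comm]

lemma mink_sum_left {κ : Type*} (s : Finset κ) (x : κ → Fin 4 → ℝ) (y : Fin 4 → ℝ) :
    mink (∑ k ∈ s, x k) y = ∑ k ∈ s, mink (x k) y := by
  classical
  induction s using Finset.induction_on with
  | empty => simp [mink]
  | insert k s hk ih => rw [Finset.sum_insert hk, Finset.sum_insert hk, mink_add_left, ih]

lemma mink_sum_right {κ : Type*} (s : Finset κ) (x : Fin 4 → ℝ) (y : κ → Fin 4 → ℝ) :
    mink x (∑ k ∈ s, y k) = ∑ k ∈ s, mink x (y k) := by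
  simp only [mink_comm x, mink_sum_left]

lemma HasDerivAt.mink {u w : ℝ → Fin 4 → ℝ} {u' w' : Fin 4 → ℝ} {t : ℝ}
    (hu : HasDerivAt u u' t) (hw : HasDerivAt w w' t) :
    HasDerivAt (fun s => _root_.mink (u s) (w s))
      (_root_.mink u' (w t) + _root_.mink (u t) w') t := by
  have h (k : Fin 4) : HasDerivAt (fun s => u s k * w s k) (u' k * w t k + u t k * w' k) t :=
    (hasDerivAt_pi.1 hu k).mul (hasDerivAt_pi.1 hw k)
  exact ((((h 0).neg.add (h 1)).add (h 2)).add (h 3)).congr_deriv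
    (by simp only [_root_.mink]; ring)

lemma mink_lcross_eq_det (w x y z : Fin 4 → ℝ) :
    mink w (lcross x y z) = (Matrix.of ![w, x, y, z]).det := by
  simp [mink, lcross, Matrix.det_succ_row_zero, Fin.sum_univ_succ, Fin.succAbove]
  ring

@[simp]
lemma mink_lcross_self_middle (x y z : Fin 4 → ℝ) : mink y (lcross x y z) = 0 := by
  rw [mink_lcross_eq_det]
  exact Matrix.det_zero_of_row_eq (i := 0) (j := 2) (by decide) rfl

@[simp]
lemma mink_lcross_self_right (x y z : Fin 4 → ℝ) : mink z (lcross x y z) = 0 := by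
  rw [mink_lcross_eq_det]
  exact Matrix.det_zero_of_row_eq (i := 0) (j := 3) (by decide) rfl

lemma mink_lcross_rows_eq_det (F : Fin 4 → Fin 4 → ℝ) :
    mink (F 0) (lcross (F 1) (F 2) (F 3)) = (Matrix.of F).det := by
  rw [mink_lcross_eq_det]
  congr
  ext i
  fin_cases i <;> rfl

section Gram

variable {ι : Type*} [Fintype ι]

def gram (F : ι → Fin 4 → ℝ) : ι → ι → ℝ := fun i j => mink (F i) (F j)

def gramMap : (ι → ι → ℝ) →ₗ[ℝ] (ι → ι → ℝ) →L[ℝ] (ι → ι → ℝ) where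
  toFun C := LinearMap.toContinuousLinearMap
    { toFun X i j := ∑ k, (C i k * X k j + C j k * X i k)
      map_add' X Y := by
        ext; simp only [Pi.add_apply, ← Finset.sum_add_distrib]; congr 1; ext; ring
      map_smul' c X := by
        ext; simp only [Pi.smul_apply, smul_eq_mul, Finset.mul_sum, RingHom.id_apply]
        congr 1; ext; ring }
  map_add' C D := by ext; simp [add_mul, Finset.sum_add_distrib]; ring
  map_smul' c C := by ext; simp [Finset.mul_sum]; congr 1; ext; ring

@[simp]
lemma gramMap_apply (C X : ι → ι → ℝ) (i j : ι) :
    gramMap C X i j = ∑ k, (C i k * X k j + C j k * X i k) := rfl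

lemma hasDerivAt_gram {F : ℝ → ι → Fin 4 → ℝ} {C : ι → ι → ℝ} {t : ℝ}
    (hF : HasDerivAt F (frameMap C (F t)) t) :
    HasDerivAt (fun s => gram (F s)) (gramMap C (gram (F t))) t := by
  refine hasDerivAt_pi.2 fun i => hasDerivAt_pi.2 fun j => ?_
  refine ((hasDerivAt_pi.1 hF i).mink (hasDerivAt_pi.1 hF j)).congr_deriv ?_
  simp [gram, mink_sum_left, mink_sum_right, Finset.sum_add_distrib]

lemma gram_eq_of_hasDerivAt_frameMap {J : Set ℝ} (hJo : IsOpen J) (hJc : J.OrdConnected)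
    {C : ℝ → ι → ι → ℝ} (hC : ContinuousOn C J) {F : ℝ → ι → Fin 4 → ℝ}
    (hF : ∀ t ∈ J, HasDerivAt F (frameMap (C t) (F t)) t) {G₀ : ι → ι → ℝ}
    (hG₀ : ∀ t ∈ J, gramMap (C t) G₀ = 0) {t₀ : ℝ} (ht₀ : t₀ ∈ J) (h₀ : gram (F t₀) = G₀) :
    ∀ t ∈ J, gram (F t) = G₀ :=
  eqOn_of_hasDerivAt_clm hJo hJc
    ((LinearMap.continuous_of_finiteDimensional gramMap).comp_continuousOn hC)
    (fun t ht => hasDerivAt_gram (hF t ht))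
    (fun t ht => (hG₀ t ht).symm ▸ hasDerivAt_const t G₀) ht₀ h₀

end Gram

lemma gram_eq_mul_diagonal_mul_transpose {ι : Type*} (F : ι → Fin 4 → ℝ) :
    Matrix.of (gram F) =
      Matrix.of F * Matrix.diagonal ![(-1 : ℝ), 1, 1, 1] * (Matrix.of F).transpose := by
  ext i j
  simp [gram, mink, Matrix.mul_apply, Fin.sum_univ_four]

def frenetGram : Fin 4 → Fin 4 → ℝ :=
  ![![1, 0, 0, 0], ![0, -1, 0, 0], ![0, 0, 1, 0], ![0, 0, 0, 1]]

lemma sq_det_eq_one_of_gram_eq {F : Fin 4 → Fin 4 → ℝ}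
    (h : gram F = frenetGram) : (Matrix.of F).det ^ 2 = 1 := by
  have hG : Matrix.of (gram F) = Matrix.diagonal ![1, -1, 1, 1] := by
    ext i j
    fin_cases i <;> fin_cases j <;> simp [h, frenetGram]
  have := congrArg Matrix.det (gram_eq_mul_diagonal_mul_transpose F)
  simp [hG, Matrix.det_diagonal, Fin.prod_univ_four] at this
  linear_combination -this

/-- Frames are ordered `(μ, γ, v₁, v₂)`, so the rows encode `μ' = m γ - a v₁ - b v₂`, `γ' = m μ`,
`v₁' = a μ + n v₂` and `v₂' = b μ - n v₁`. -/
def frenetMatrix (m n a b : ℝ) : Fin 4 → Fin 4 → ℝ :=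
  ![![0, m, -a, -b], ![m, 0, 0, 0], ![a, 0, 0, n], ![b, 0, -n, 0]]

lemma contDiffOn_frenetMatrix {k : WithTop ℕ∞} {I : Set ℝ} {m n a b : ℝ → ℝ}
    (hm : ContDiffOn ℝ k m I) (hn : ContDiffOn ℝ k n I) (ha : ContDiffOn ℝ k a I)
    (hb : ContDiffOn ℝ k b I) :
    ContDiffOn ℝ k (fun t => frenetMatrix (m t) (n t) (a t) (b t)) I := by
  refine contDiffOn_pi.2 fun i => contDiffOn_pi.2 fun j => ?_
  fin_cases i <;> fin_cases j <;>
    simp [frenetMatrix, contDiffOn_const, hm, hn, ha, hb, hn.neg, ha.neg, hb.neg]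

lemma gramMap_frenetMatrix (m n a b : ℝ) :
    gramMap (frenetMatrix m n a b) frenetGram = 0 := by
  ext i j
  rw [gramMap_apply, Fin.sum_univ_four]
  fin_cases i <;> fin_cases j <;> simp [frenetMatrix, frenetGram]

def initialFrame : Fin 4 → Fin 4 → ℝ :=
  ![![0, 0, 0, -1], ![1, 0, 0, 0], ![0, 1, 0, 0], ![0, 0, 1, 0]]

lemma gram_initialFrame : gram initialFrame = frenetGram := by
  ext i j
  fin_cases i <;> fin_cases j <;> simp [gram, initialFrame, mink, frenetGram]

lemma det_initialFrame : (Matrix.of initialFrame).det = 1 := by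
  simp [initialFrame, Matrix.det_succ_row_zero, Fin.sum_univ_succ, Fin.succAbove]
  norm_num

theorem exists_frenetFrame {I : Set ℝ} (hIo : IsOpen I) (hIc : I.OrdConnected)
    {m n a b : ℝ → ℝ}
    (hm : ContDiffOn ℝ (⊤ : ℕ∞) m I) (hn : ContDiffOn ℝ (⊤ : ℕ∞) n I)
    (ha : ContDiffOn ℝ (⊤ : ℕ∞) a I) (hb : ContDiffOn ℝ (⊤ : ℕ∞) b I) {t₀ : ℝ} (ht₀ : t₀ ∈ I) :
    ∃ F : ℝ → Fin 4 → Fin 4 → ℝ, ContDiffOn ℝ (⊤ : ℕ∞) F I ∧ ∀ t ∈ I,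
      HasDerivAt F (frameMap (frenetMatrix (m t) (n t) (a t) (b t)) (F t)) t ∧
      gram (F t) = frenetGram ∧ mink (F t 0) (lcross (F t 1) (F t 2) (F t 3)) = 1 := by
  have hC := contDiffOn_frenetMatrix hm hn ha hb
  obtain ⟨F, hF₀, hF⟩ :=
    exists_hasDerivAt_clm hIo hIc (hC.frameMap (V := Fin 4 → ℝ)).continuousOn ht₀ initialFrame
  have hgram := gram_eq_of_hasDerivAt_frameMap hIo hIc hC.continuousOn hF
    (fun t _ => gramMap_frenetMatrix _ _ _ _) ht₀ (hF₀ ▸ gram_initialFrame)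
  have hdet := hIc.isPreconnected.eq_one_of_sq_eq_one
    ((continuous_id.matrix_det).comp_continuousOn (HasDerivAt.continuousOn hF))
    (fun t ht => sq_det_eq_one_of_gram_eq (hgram t ht)) ht₀
    (show (Matrix.of (F t₀)).det = 1 by rw [hF₀]; exact det_initialFrame)
  exact ⟨F, contDiffOn_of_hasDerivAt_clm hIo hC.frameMap hF, fun t ht =>
    ⟨hF t ht, hgram t ht, (mink_lcross_rows_eq_det _).trans (hdet t ht)⟩⟩

theorem existence_of_hyperbolic_framed_curves
    (I : Set ℝ) (hIo : IsOpen I) (hIc : I.OrdConnected)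
    (m n a b : ℝ → ℝ)
    (hm : ContDiffOn ℝ (⊤ : ℕ∞) m I) (hn : ContDiffOn ℝ (⊤ : ℕ∞) n I)
    (ha : ContDiffOn ℝ (⊤ : ℕ∞) a I) (hb : ContDiffOn ℝ (⊤ : ℕ∞) b I) :
    ∃ γ v₁ v₂ : ℝ → Fin 4 → ℝ,
      IsHypFramed I γ v₁ v₂ ∧ HasCurv I γ v₁ v₂ m n a b := by
  rcases I.eq_empty_or_nonempty with rfl | ⟨t₀, ht₀⟩
  · exact ⟨0, 0, 0, ⟨contDiffOn_empty, contDiffOn_empty, contDiffOn_empty, by simp⟩,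
      by simp [HasCurv]⟩
  obtain ⟨F, hFs, hF⟩ := exists_frenetFrame hIo hIc hm hn ha hb ht₀
  have hrow : ∀ t ∈ I, ∀ i,
      deriv (F · i) t = frameMap (frenetMatrix (m t) (n t) (a t) (b t)) (F t) i :=
    fun t ht i => (hasDerivAt_pi.1 (hF t ht).1 i).deriv
  refine ⟨(F · 1), (F · 2), (F · 3), ⟨contDiffOn_pi.1 hFs 1, contDiffOn_pi.1 hFs 2,
    contDiffOn_pi.1 hFs 3, fun t ht => ?_⟩, fun t ht => ?_⟩ <;>
  · obtain ⟨-, hG, hμ⟩ := hF t ht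
    have hG' (i j) : mink (F t i) (F t j) = frenetGram i j := congrFun (congrFun hG i) j
    simp [hrow t ht, Fin.sum_univ_four, frenetMatrix, hG', frenetGram, hμ]
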